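/- Let S be a set of k nodes among N, fix I ⊆ S with |I| = m, and let C be a collection of k-subsets, each containing I, such that any two distinct members of C intersect exactly in I, and each member of C intersects S exactly in I. If edge weights are independent Gaussians (mean μ on edges inside S, mean 0 otherwise, variance σ²), then the random variables W_REM(Ŝ) = W(Ŝ) − W(I) for Ŝ ∈ C ∪ {S} are mutually independent, with W_REM(S) ~ N(ℓ_m μ, ℓ_m σ²) and W_REM(Ŝ) ~ N(0, ℓ_m σ²) for Ŝ ∈ C, where ℓ_m = C(k,2) − C(m,2). -/

import Mathlib

/-!
Each `W_REM(Ŝ) = W(Ŝ) − W(I)` is the sum of the edge weights over the `ℓ_m` edges of `Ŝ` not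
inside `I`. Because two distinct sets of `C ∪ {S}` meet exactly in `I`, these edge blocks are
pairwise disjoint, so the `W_REM(Ŝ)` are functions of disjoint blocks of independent coordinates,
hence independent. A sum of `ℓ_m` independent Gaussians of variance `σ²` is Gaussian with variance
`ℓ_m σ²`; its mean is `ℓ_m μ` for `S`, whose edges all lie in `S`, and `0` for `Ŝ ∈ C`, none of
whose edges outside `I` lies in `S`.
-/

open Finset MeasureTheory ProbabilityTheory

/-- Weight of a node set `A`: sum of the weights of all edges (2-subsets) inside `A`. -/
noncomputable def Wgraph {N : ℕ} (E : Finset (Fin N) → ℝ) (A : Finset (Fin N)) : ℝ :=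
  ∑ e ∈ A.powersetCard 2, E e

/-- The 2-WSBM edge-weight distribution: all edge weights independent Gaussians
with variance `v`, mean `μ` on edges (2-subsets) inside `S` and mean `0` otherwise. -/
noncomputable def wsbmMeasure (μ : ℝ) (v : NNReal) {N : ℕ} (S : Finset (Fin N)) :
    Measure (Finset (Fin N) → ℝ) :=
  Measure.pi fun e : Finset (Fin N) =>
    ProbabilityTheory.gaussianReal (if e.card = 2 ∧ e ⊆ S then μ else 0) v

open scoped NNReal
open Function

namespace ProbabilityTheory

variable {Ω ι : Type*} {mΩ : MeasurableSpace Ω} {P : Measure Ω}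

lemma iIndepFun.curry {κ : ι → Type*} {𝓧 : (i : ι) → κ i → Type*}
    {m𝓧 : ∀ i j, MeasurableSpace (𝓧 i j)} {X : (i : ι) → (j : κ i) → Ω → 𝓧 i j}
    (mX : ∀ i j, Measurable (X i j))
    (h : iIndepFun (fun (p : (i : ι) × κ i) ω ↦ X p.1 p.2 ω) P) :
    iIndepFun (fun i ω ↦ (X i · ω)) P := by
  have := h.isProbabilityMeasure
  have : ∀ i j, IsProbabilityMeasure (P.map (X i j)) :=
    fun i j ↦ Measure.isProbabilityMeasure_map (mX i j).aemeasurable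
  have hcurry : (fun ω i j ↦ X i j ω) = MeasurableEquiv.piCurry 𝓧 ∘ fun ω p ↦ X p.1 p.2 ω := by
    ext; simp [Sigma.curry]
  rw [iIndepFun_iff_map_fun_eq_infinitePi_map (by fun_prop), hcurry,
    ← Measure.map_map (by fun_prop) (by fun_prop),
    h.map_fun_eq_infinitePi_map (fun p ↦ mX p.1 p.2),
    Measure.infinitePi_map_piCurry (fun i j ↦ P.map (X i j))]
  congrm Measure.infinitePi fun i ↦ ?_
  exact ((h.precomp sigma_mk_injective).map_fun_eq_infinitePi_map (mX i)).symm

lemma iIndepFun.map_finsetSum_eq_gaussianReal {X : ι → Ω → ℝ} (hX : iIndepFun X P)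
    (mX : ∀ i, Measurable (X i)) {m : ι → ℝ} {v : ι → ℝ≥0}
    (hlaw : ∀ i, P.map (X i) = gaussianReal (m i) (v i)) (s : Finset ι) :
    P.map (∑ i ∈ s, X i) = gaussianReal (∑ i ∈ s, m i) (∑ i ∈ s, v i) := by
  classical
  have := hX.isProbabilityMeasure
  induction s using Finset.induction_on with
  | empty => simp [gaussianReal_zero_var, Pi.zero_def, Measure.map_const]
  | insert a s ha ih =>
    rw [sum_insert ha, sum_insert ha, sum_insert ha, add_comm, add_comm (m a), add_comm (v a)]
    exact gaussianReal_add_gaussianReal_of_indepFun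
      (hX.indepFun_finsetSum_of_notMem mX ha) ih (hlaw a)

lemma iIndepFun_finsetSum_pi {α κ : Type*} [Fintype α] {ν : α → Measure ℝ}
    [∀ a, IsProbabilityMeasure (ν a)] {D : κ → Finset α} (hD : Pairwise (Disjoint on D)) :
    iIndepFun (fun j (x : α → ℝ) ↦ ∑ a ∈ D j, x a) (Measure.pi ν) := by
  have hcoord : iIndepFun (fun a (x : α → ℝ) ↦ x a) (Measure.pi ν) :=
    iIndepFun_pi (X := fun _ ↦ id) fun _ ↦ aemeasurable_id
  have hinj : Function.Injective fun p : (j : κ) × D j ↦ (p.2 : α) := by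
    rintro ⟨j, a, ha⟩ ⟨j', a', ha'⟩ (rfl : a = a')
    obtain rfl : j = j' := by
      by_contra hne
      exact disjoint_left.mp (hD hne) ha ha'
    rfl
  have hblocks := (hcoord.precomp hinj).curry (X := fun j (a : D j) (x : α → ℝ) ↦ x a)
    fun _ _ ↦ measurable_pi_apply _
  convert hblocks.comp (fun j (y : D j → ℝ) ↦ ∑ a, y a) fun _ ↦ by fun_prop with j x
  exact (sum_coe_sort (D j) x).symm

lemma map_finsetSum_pi_gaussianReal {α : Type*} [Fintype α] (m : α → ℝ) (v : α → ℝ≥0)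
    (s : Finset α) :
    (Measure.pi fun a ↦ gaussianReal (m a) (v a)).map (fun x ↦ ∑ a ∈ s, x a) =
      gaussianReal (∑ a ∈ s, m a) (∑ a ∈ s, v a) := by
  have hcoord : iIndepFun (fun a (x : α → ℝ) ↦ x a)
      (Measure.pi fun a ↦ gaussianReal (m a) (v a)) :=
    iIndepFun_pi (X := fun _ ↦ id) fun _ ↦ aemeasurable_id
  have := hcoord.map_finsetSum_eq_gaussianReal measurable_pi_apply
    (fun a ↦ (measurePreserving_eval _ a).map_eq) s
  simpa only [Finset.sum_fn] using this

end ProbabilityTheory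

section Edges

variable {α : Type*} [DecidableEq α]

def edgesOutside (A I : Finset α) : Finset (Finset α) :=
  A.powersetCard 2 \ I.powersetCard 2

lemma card_edgesOutside {A I : Finset α} (h : I ⊆ A) :
    #(edgesOutside A I) = A.card.choose 2 - I.card.choose 2 := by
  rw [edgesOutside, card_sdiff_of_subset (powersetCard_mono h), card_powersetCard,
    card_powersetCard]

lemma disjoint_edgesOutside {A B I : Finset α} (h : A ∩ B = I) :
    Disjoint (edgesOutside A I) (edgesOutside B I) := by
  simp only [edgesOutside, disjoint_left, mem_sdiff, mem_powersetCard]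
  rintro e ⟨⟨heA, he2⟩, heI⟩ ⟨⟨heB, -⟩, -⟩
  exact heI ⟨h ▸ subset_inter heA heB, he2⟩

lemma mem_edgesOutside {A I e : Finset α} :
    e ∈ edgesOutside A I ↔ e ⊆ A ∧ e.card = 2 ∧ ¬ e ⊆ I := by
  simp only [edgesOutside, mem_sdiff, mem_powersetCard]
  tauto

lemma not_subset_of_mem_edgesOutside {A S I e : Finset α} (h : A ∩ S = I)
    (he : e ∈ edgesOutside A I) : ¬ e ⊆ S := fun heS ↦
  (mem_edgesOutside.mp he).2.2 (h ▸ subset_inter (mem_edgesOutside.mp he).1 heS)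

end Edges

lemma Wgraph_sub_Wgraph {N : ℕ} (E : Finset (Fin N) → ℝ) {A I : Finset (Fin N)} (h : I ⊆ A) :
    Wgraph E A - Wgraph E I = ∑ e ∈ edgesOutside A I, E e := by
  rw [Wgraph, Wgraph, edgesOutside, ← sum_sdiff (powersetCard_mono h), add_sub_cancel_right]

lemma map_Wgraph_sub_Wgraph_wsbmMeasure (μ : ℝ) (v : ℝ≥0) {N : ℕ} (S : Finset (Fin N))
    {A I : Finset (Fin N)} (h : I ⊆ A) :
    (wsbmMeasure μ v S).map (fun E ↦ Wgraph E A - Wgraph E I) =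
      gaussianReal (∑ e ∈ edgesOutside A I, if e.card = 2 ∧ e ⊆ S then μ else 0)
        (#(edgesOutside A I) * v) := by
  simp only [Wgraph_sub_Wgraph _ h, wsbmMeasure, map_finsetSum_pi_gaussianReal, sum_const,
    nsmul_eq_mul]

theorem stmt13 (μ : ℝ) (v : NNReal) (N k m : ℕ)
    (S I : Finset (Fin N)) (hS : S.card = k) (hIS : I ⊆ S) (hI : I.card = m)
    (C : Finset (Finset (Fin N)))
    (hmem : ∀ A ∈ C, A.card = k ∧ I ⊆ A ∧ A ∩ S = I)
    (hpair : ∀ A ∈ C, ∀ B ∈ C, A ≠ B → A ∩ B = I) :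
    (ProbabilityTheory.iIndepFun
        (fun A : ↑(insert S C) => fun E => Wgraph E (A : Finset (Fin N)) - Wgraph E I)
        (wsbmMeasure μ v S)) ∧
      (Measure.map (fun E => Wgraph E S - Wgraph E I) (wsbmMeasure μ v S) =
        ProbabilityTheory.gaussianReal ((k.choose 2 - m.choose 2 : ℕ) * μ)
          ((k.choose 2 - m.choose 2 : ℕ) * v)) ∧
      (∀ A ∈ C, Measure.map (fun E => Wgraph E A - Wgraph E I) (wsbmMeasure μ v S) =
        ProbabilityTheory.gaussianReal 0 ((k.choose 2 - m.choose 2 : ℕ) * v)) := by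
  have hsub : ∀ A ∈ insert S C, I ⊆ A := by
    simpa [hIS] using fun A hA ↦ (hmem A hA).2.1
  have hinter : ∀ A ∈ insert S C, ∀ B ∈ insert S C, A ≠ B → A ∩ B = I := by
    simp only [mem_insert]
    rintro A (rfl | hA) B (rfl | hB) hAB
    exacts [(hAB rfl).elim, inter_comm A B ▸ (hmem B hB).2.2, (hmem A hA).2.2,
      hpair A hA B hB hAB]
  refine ⟨?_, ?_, fun A hA ↦ ?_⟩
  · simp only [Wgraph_sub_Wgraph _ (hsub _ (Subtype.prop _))]
    exact iIndepFun_finsetSum_pi fun A B hAB ↦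
      disjoint_edgesOutside (hinter A A.2 B B.2 (Subtype.coe_ne_coe.mpr hAB))
  · rw [map_Wgraph_sub_Wgraph_wsbmMeasure μ v S hIS,
      sum_congr rfl fun e he ↦ if_pos ⟨(mem_edgesOutside.mp he).2.1, (mem_edgesOutside.mp he).1⟩,
      sum_const, nsmul_eq_mul, card_edgesOutside hIS, hS, hI]
  · obtain ⟨hA, hIA, hAS⟩ := hmem A hA
    rw [map_Wgraph_sub_Wgraph_wsbmMeasure μ v S hIA, card_edgesOutside hIA, hA, hI,
      sum_eq_zero fun e he ↦ if_neg fun h ↦ not_subset_of_mem_edgesOutside hAS he h.2]
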